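/- arXiv:1402.3485 — 2 statements merged into one kernel-verified Lean document; each statement's English description precedes it below -/
import Mathlib

section
/- For α, β > -1, n ≥ 1, m ≥ 1, and x ∈ (0,1), the moments of the Beta operator satisfy the recursion (n+m+α+β+2) T_{n,m+1}^{α,β}(x) = m x(1-x) T_{n,m-1}^{α,β}(x) + [m+α+1-(2m+α+β+2)x] T_{n,m}^{α,β}(x). -/
open MeasureTheory intervalIntegral Filter

/-- The Beta operator with Jacobi weights: `B_n^{α,β}(f;x)`. -/
noncomputable def Bop (n α β : ℝ) (f : ℝ → ℝ) (x : ℝ) : ℝ :=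
  (∫ t in (0:ℝ)..1, t ^ (n * x + α) * (1 - t) ^ (n - n * x + β) * f t) /
  (∫ t in (0:ℝ)..1, t ^ (n * x + α) * (1 - t) ^ (n - n * x + β))

/-- The `m`-th central moment `T_{n,m}^{α,β}(x)`. -/
noncomputable def T (n α β : ℝ) (m : ℕ) (x : ℝ) : ℝ :=
  Bop n α β (fun t => (t - x) ^ m) x

/-!
Write `w(t) = t^p (1-t)^q` with `p = nx + α`, `q = n - nx + β`, both `> -1`. The function
`t^(p+1) (1-t)^(q+1) (t-x)^m` vanishes at both ends of `[0,1]`, so its derivative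
`w(t) [m t(1-t) (t-x)^(m-1) + ((p+1)(1-t) - (q+1)t) (t-x)^m]` integrates to zero. Expanding
`t(1-t)` and `t` around `x` turns this into a linear relation between the unnormalised moments
`∫ w(t) (t-x)^j` for `j = m-1, m, m+1`; dividing by `∫ w` gives the recursion.
-/

open Set Real

lemma natCast_mul_pow_sub_one_mul {R : Type*} [CommSemiring R] (m : ℕ) (y : R) :
    (m : R) * (y ^ (m - 1) * y) = m * y ^ m := by
  cases m with
  | zero => simp
  | succ k => simp [pow_succ]

section BetaWeight

variable {p q : ℝ}

lemma intervalIntegrable_rpow_mul_one_sub_rpow_zero_half (hp : -1 < p) (q : ℝ) :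
    IntervalIntegrable (fun t : ℝ => t ^ p * (1 - t) ^ q) volume 0 (1 / 2) := by
  refine (intervalIntegrable_rpow' hp).mul_continuousOn ?_
  refine ContinuousOn.rpow_const (by fun_prop) fun t ht => Or.inl ?_
  rw [uIcc_of_le (by norm_num)] at ht
  linarith [ht.2]

lemma intervalIntegrable_rpow_mul_one_sub_rpow (hp : -1 < p) (hq : -1 < q) :
    IntervalIntegrable (fun t : ℝ => t ^ p * (1 - t) ^ q) volume 0 1 := by
  have hright : IntervalIntegrable (fun t : ℝ => t ^ p * (1 - t) ^ q) volume (1 / 2) 1 := by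
    simpa [mul_comm, show (1 : ℝ) - 2⁻¹ = 2⁻¹ by norm_num] using
      ((intervalIntegrable_rpow_mul_one_sub_rpow_zero_half hq p).comp_sub_left 1).symm
  exact (intervalIntegrable_rpow_mul_one_sub_rpow_zero_half hp q).trans hright

lemma intervalIntegrable_rpow_mul_one_sub_rpow_mul (hp : -1 < p) (hq : -1 < q)
    {g : ℝ → ℝ} (hg : ContinuousOn g (uIcc 0 1)) :
    IntervalIntegrable (fun t : ℝ => t ^ p * (1 - t) ^ q * g t) volume 0 1 :=
  (intervalIntegrable_rpow_mul_one_sub_rpow hp hq).mul_continuousOn hg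

lemma hasDerivAt_rpow_mul_one_sub_rpow_mul_pow (p q x : ℝ) (m : ℕ) {t : ℝ} (ht : t ∈ Ioo 0 1) :
    HasDerivAt (fun t : ℝ => t ^ (p + 1) * (1 - t) ^ (q + 1) * (t - x) ^ m)
      (t ^ p * (1 - t) ^ q *
        (m * (t * (1 - t)) * (t - x) ^ (m - 1) + ((p + 1) * (1 - t) - (q + 1) * t) * (t - x) ^ m))
      t := by
  have ht0 : t ≠ 0 := ht.1.ne'
  have ht1 : 1 - t ≠ 0 := by linarith [ht.2]
  have hA : HasDerivAt (fun t : ℝ => t ^ (p + 1)) ((p + 1) * t ^ p) t := by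
    simpa using hasDerivAt_rpow_const (p := p + 1) (Or.inl ht0)
  have hB : HasDerivAt (fun t : ℝ => (1 - t) ^ (q + 1)) (-(q + 1) * (1 - t) ^ q) t := by
    simpa using ((hasDerivAt_id t).const_sub 1).rpow_const (p := q + 1) (Or.inl ht1)
  have hC : HasDerivAt (fun t : ℝ => (t - x) ^ m) (m * (t - x) ^ (m - 1)) t := by
    simpa using ((hasDerivAt_id t).sub_const x).fun_pow m
  refine ((hA.fun_mul hB).fun_mul hC).congr_deriv ?_
  rw [rpow_add_one ht0, rpow_add_one ht1]
  ring

lemma integral_rpow_mul_one_sub_rpow_mul_deriv_eq_zero (hp : -1 < p) (hq : -1 < q) (x : ℝ)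
    (m : ℕ) :
    ∫ t in (0 : ℝ)..1, t ^ p * (1 - t) ^ q *
      (m * (t * (1 - t)) * (t - x) ^ (m - 1) + ((p + 1) * (1 - t) - (q + 1) * t) * (t - x) ^ m)
      = 0 := by
  have hcont : ContinuousOn (fun t : ℝ => t ^ (p + 1) * (1 - t) ^ (q + 1) * (t - x) ^ m)
      (Icc 0 1) := by
    refine ((continuousOn_id.rpow_const fun t _ => Or.inr ?_).mul
      ((continuousOn_const.sub continuousOn_id).rpow_const fun t _ => Or.inr ?_)).mul
      (by fun_prop) <;> linarith
  rw [integral_eq_sub_of_hasDerivAt_of_le zero_le_one hcont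
    (fun t ht => hasDerivAt_rpow_mul_one_sub_rpow_mul_pow p q x m ht)
    (intervalIntegrable_rpow_mul_one_sub_rpow_mul hp hq (by fun_prop))]
  simp [zero_rpow (by linarith : p + 1 ≠ 0), zero_rpow (by linarith : q + 1 ≠ 0)]

noncomputable def betaMoment (p q x : ℝ) (j : ℕ) : ℝ :=
  ∫ t in (0 : ℝ)..1, t ^ p * (1 - t) ^ q * (t - x) ^ j

theorem betaMoment_recursion (hp : -1 < p) (hq : -1 < q) (x : ℝ) (m : ℕ) :
    (p + q + m + 2) * betaMoment p q x (m + 1) =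
      m * (x * (1 - x)) * betaMoment p q x (m - 1) +
        (m * (1 - 2 * x) + p + 1 - (p + q + 2) * x) * betaMoment p q x m := by
  set f : ℕ → ℝ → ℝ := fun j t => t ^ p * (1 - t) ^ q * (t - x) ^ j
  have hf (j : ℕ) : IntervalIntegrable (f j) volume 0 1 :=
    intervalIntegrable_rpow_mul_one_sub_rpow_mul hp hq (by fun_prop)
  have hexpand (t : ℝ) : t ^ p * (1 - t) ^ q *
      (m * (t * (1 - t)) * (t - x) ^ (m - 1) + ((p + 1) * (1 - t) - (q + 1) * t) * (t - x) ^ m)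
      = m * (x * (1 - x)) * f (m - 1) t + (m * (1 - 2 * x) + p + 1 - (p + q + 2) * x) * f m t
        - (p + q + m + 2) * f (m + 1) t := by
    linear_combination (t ^ p * (1 - t) ^ q * (1 - 2 * x - (t - x)))
      * natCast_mul_pow_sub_one_mul m (t - x)
  have h := integral_rpow_mul_one_sub_rpow_mul_deriv_eq_zero hp hq x m
  rw [integral_congr fun t _ => hexpand t, integral_sub (((hf _).const_mul _).add
    ((hf _).const_mul _)) ((hf _).const_mul _), integral_add ((hf _).const_mul _)
    ((hf _).const_mul _)] at h
  simp only [intervalIntegral.integral_const_mul] at h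
  simp only [betaMoment]
  linarith

end BetaWeight

theorem moment_recursion_general (α β : ℝ) (hα : α > -1) (hβ : β > -1)
    (n m : ℕ) (x : ℝ) (hx : x ∈ Set.Ioo (0:ℝ) 1) :
    (n + m + α + β + 2) * T n α β (m + 1) x =
      m * (x * (1 - x)) * T n α β (m - 1) x +
        (m + α + 1 - (2 * m + α + β + 2) * x) * T n α β m x := by
  set p := n * x + α
  set q := n - n * x + β
  have hp : -1 < p := by nlinarith [hx.1, (Nat.cast_nonneg n : (0 : ℝ) ≤ n)]
  have hq : -1 < q := by nlinarith [hx.2, (Nat.cast_nonneg n : (0 : ℝ) ≤ n)]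
  have hT (j : ℕ) : T n α β j x = betaMoment p q x j / ∫ t in (0 : ℝ)..1, t ^ p * (1 - t) ^ q :=
    rfl
  have h := betaMoment_recursion hp hq x m
  simp only [hT, ← mul_div_assoc, ← add_div]
  congr 1
  linear_combination h

theorem moment_recursion (α β : ℝ) (hα : α > -1) (hβ : β > -1)
    (n m : ℕ) (hn : 1 ≤ n) (hm : 1 ≤ m) (x : ℝ) (hx : x ∈ Set.Ioo (0:ℝ) 1) :
    (n + m + α + β + 2) * T n α β (m + 1) x =
      m * (x * (1 - x)) * T n α β (m - 1) x +
        (m + α + 1 - (2 * m + α + β + 2) * x) * T n α β m x :=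
  moment_recursion_general α β hα hβ n m x hx
end

section
/- For α, β > -1, n ≥ 1, x ∈ [0,1], nonnegative integers i, j, and f ∈ C[0,1]: B_n^{α,β}(t^i (1-t)^j f(t); x) = [(nx+α+1)^{(i)} · (n(1-x)+β+1)^{(j)} / (n+α+β+2)^{(i+j)}] · B_n^{α+i,β+j}(f; x), where a^{(r)} = a(a+1)···(a+r-1) denotes the rising factorial. -/
open MeasureTheory intervalIntegral Filter

/-!
The denominators of `Bop` are Euler Beta integrals, `∫₀¹ t^p (1-t)^q dt = B(p+1, q+1)`.
Absorbing the weight `t^i (1-t)^j` into the kernel turns the numerator of `B_n^{α,β}` into that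
of `B_n^{α+i,β+j}`, so the two operators differ by the ratio of their normalising constants
`B(a+i, b+j) / B(a, b)`, which `Γ(c + m) = Γ(c) · c^{(m)}` turns into rising factorials.
-/

open ProbabilityTheory Polynomial

lemma integral_rpow_mul_one_sub_rpow {p q : ℝ} (hp : -1 < p) (hq : -1 < q) :
    ∫ t in (0:ℝ)..1, t ^ p * (1 - t) ^ q = beta (p + 1) (q + 1) := by
  have hcast : Complex.betaIntegral (p + 1 : ℝ) (q + 1 : ℝ) =
      ((∫ t in (0:ℝ)..1, t ^ p * (1 - t) ^ q : ℝ) : ℂ) := by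
    rw [Complex.betaIntegral, ← intervalIntegral.integral_ofReal]
    refine intervalIntegral.integral_congr fun t ht => ?_
    rw [Set.uIcc_of_le zero_le_one] at ht
    push_cast
    rw [Complex.ofReal_cpow ht.1, Complex.ofReal_cpow (sub_nonneg.mpr ht.2)]
    push_cast
    ring_nf
  rw [beta_eq_betaIntegralReal _ _ (by linarith) (by linarith), hcast, Complex.ofReal_re]

lemma Real.Gamma_add_nat_eq_mul_ascPochhammer {a : ℝ} (ha : ∀ k : ℕ, a ≠ -k) (m : ℕ) :
    Real.Gamma (a + m) = Real.Gamma a * (ascPochhammer ℝ m).eval a := by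
  induction m with
  | zero => simp
  | succ k ih =>
    have hk : a + k ≠ 0 := fun h => ha k (eq_neg_of_add_eq_zero_left h)
    rw [Nat.cast_succ, ← add_assoc, Real.Gamma_add_one hk, ih, ascPochhammer_succ_right]
    simp only [eval_mul, eval_add, eval_X, eval_natCast]
    ring

lemma beta_add_nat_add_nat {a b : ℝ} (ha : 0 < a) (hb : 0 < b) (i j : ℕ) :
    beta (a + i) (b + j) =
      (ascPochhammer ℝ i).eval a * (ascPochhammer ℝ j).eval b /
        (ascPochhammer ℝ (i + j)).eval (a + b) * beta a b := by
  have hpos {c : ℝ} (hc : 0 < c) (k : ℕ) : c ≠ -k :=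
    ((neg_nonpos.mpr k.cast_nonneg).trans_lt hc).ne'
  have hab := add_pos ha hb
  rw [beta, beta, show a + i + (b + j) = a + b + ((i + j : ℕ) : ℝ) by push_cast; ring,
    Real.Gamma_add_nat_eq_mul_ascPochhammer (hpos ha),
    Real.Gamma_add_nat_eq_mul_ascPochhammer (hpos hb),
    Real.Gamma_add_nat_eq_mul_ascPochhammer (hpos hab)]
  have := (Real.Gamma_pos_of_pos hab).ne'
  have := (ascPochhammer_pos (i + j) _ hab).ne'
  field_simp

lemma integral_rpow_mul_one_sub_rpow_mul_pow (p q : ℝ) (i j : ℕ) (f : ℝ → ℝ) :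
    ∫ t in (0:ℝ)..1, t ^ p * (1 - t) ^ q * (t ^ i * (1 - t) ^ j * f t) =
      ∫ t in (0:ℝ)..1, t ^ (p + i) * (1 - t) ^ (q + j) * f t := by
  refine intervalIntegral.integral_congr_Ioo_of_le zero_le_one fun t ⟨ht0, ht1⟩ => ?_
  simp only [Real.rpow_add ht0, Real.rpow_add (sub_pos.mpr ht1), Real.rpow_natCast]
  ring

theorem beta_average_weight_shift {p q : ℝ} (hp : -1 < p) (hq : -1 < q) (i j : ℕ) (f : ℝ → ℝ) :
    (∫ t in (0:ℝ)..1, t ^ p * (1 - t) ^ q * (t ^ i * (1 - t) ^ j * f t)) /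
        ∫ t in (0:ℝ)..1, t ^ p * (1 - t) ^ q =
      (ascPochhammer ℝ i).eval (p + 1) * (ascPochhammer ℝ j).eval (q + 1) /
          (ascPochhammer ℝ (i + j)).eval (p + q + 2) *
        ((∫ t in (0:ℝ)..1, t ^ (p + i) * (1 - t) ^ (q + j) * f t) /
          ∫ t in (0:ℝ)..1, t ^ (p + i) * (1 - t) ^ (q + j)) := by
  have ha : 0 < p + 1 := by linarith
  have hb : 0 < q + 1 := by linarith
  have hi : -1 < p + i := by linarith [i.cast_nonneg (α := ℝ)]
  have hj : -1 < q + j := by linarith [j.cast_nonneg (α := ℝ)]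
  rw [integral_rpow_mul_one_sub_rpow_mul_pow, integral_rpow_mul_one_sub_rpow hp hq,
    integral_rpow_mul_one_sub_rpow hi hj, show p + i + 1 = p + 1 + i by ring,
    show q + j + 1 = q + 1 + j by ring,
    beta_add_nat_add_nat ha hb, show p + q + 2 = p + 1 + (q + 1) by ring]
  have := (beta_pos ha hb).ne'
  have := (ascPochhammer_pos i _ ha).ne'
  have := (ascPochhammer_pos j _ hb).ne'
  have := (ascPochhammer_pos (i + j) _ (add_pos ha hb)).ne'
  field_simp

theorem beta_op_weight_shift_general (α β : ℝ) (hα : α > -1) (hβ : β > -1)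
    (n : ℕ) (x : ℝ) (hx : x ∈ Set.Icc (0:ℝ) 1) (i j : ℕ)
    (f : ℝ → ℝ) :
    Bop n α β (fun t => t ^ i * (1 - t) ^ j * f t) x =
      (ascPochhammer ℝ i).eval (n * x + α + 1) *
        (ascPochhammer ℝ j).eval (n * (1 - x) + β + 1) /
          (ascPochhammer ℝ (i + j)).eval (n + α + β + 2) *
        Bop n (α + i) (β + j) f x := by
  have hnx : 0 ≤ (n : ℝ) * x := mul_nonneg n.cast_nonneg hx.1
  have hnx' : 0 ≤ (n : ℝ) * (1 - x) := mul_nonneg n.cast_nonneg (sub_nonneg.mpr hx.2)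
  have key := beta_average_weight_shift (p := n * x + α) (q := n - n * x + β)
    (by linarith) (by linarith) i j f
  rwa [Bop, Bop, ← add_assoc, show (n : ℝ) - n * x + (β + j) = n - n * x + β + j by ring,
    show (n : ℝ) * (1 - x) + β + 1 = n - n * x + β + 1 by ring,
    show (n : ℝ) + α + β + 2 = n * x + α + (n - n * x + β) + 2 by ring]

theorem beta_op_weight_shift (α β : ℝ) (hα : α > -1) (hβ : β > -1)
    (n : ℕ) (hn : 1 ≤ n) (x : ℝ) (hx : x ∈ Set.Icc (0:ℝ) 1) (i j : ℕ)
    (f : ℝ → ℝ) (hf : ContinuousOn f (Set.Icc (0:ℝ) 1)) :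
    Bop n α β (fun t => t ^ i * (1 - t) ^ j * f t) x =
      (ascPochhammer ℝ i).eval (n * x + α + 1) *
        (ascPochhammer ℝ j).eval (n * (1 - x) + β + 1) /
          (ascPochhammer ℝ (i + j)).eval (n + α + β + 2) *
        Bop n (α + i) (β + j) f x :=
  beta_op_weight_shift_general α β hα hβ n x hx i j f
end
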